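/- arXiv:1301.6232 — 3 statements merged into one kernel-verified Lean document; each statement's English description precedes it below -/
import Mathlib

section
/- Let L ≥ 1 and a > 0. Define A_a = {α ∈ ℝ₊^L : ∑_{i=1}^L α_i = a} and B_a = {α ∈ ∂ℝ₊^L : ∑_{i=1}^L α_i ≤ a}, where ∂ℝ₊^L is the set of points of ℝ₊^L with at least one vanishing coordinate. Then the map φ(α) = α + (1/L)(a − ∑_{i=1}^L α_i)·(1,…,1) maps B_a into A_a, is continuous, and is a bijection from B_a onto A_a whose inverse is the continuous map φ⁻¹(α) = α − (min_{1≤i≤L} α_i)·(1,…,1); in particular φ is a homeomorphism from B_a onto A_a. -/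
open Set

noncomputable section

/-!
Lifting a point `α` of the boundary uniformly by `(a - ∑ α) / L` lands on the simplex `∑ = a`,
and since `min α = 0` the lift is exactly `min (φ α)`; so subtracting the minimum undoes it.
Conversely, subtracting the minimum `m` of a point of the simplex produces a zero coordinate and
lowers the sum to `a - L m`, which the uniform lift restores.
-/

section

variable {ι : Type*} [Fintype ι]

def scaledSimplex (a : ℝ) : Set (ι → ℝ) :=
  {α | (∀ i, 0 ≤ α i) ∧ ∑ i, α i = a}

def coordBoundary (a : ℝ) : Set (ι → ℝ) :=
  {α | (∀ i, 0 ≤ α i) ∧ (∃ i, α i = 0) ∧ ∑ i, α i ≤ a}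

def liftToSimplex (a : ℝ) (α : ι → ℝ) : ι → ℝ :=
  fun i => α i + (a - ∑ j, α j) / Fintype.card ι

def subMin (α : ι → ℝ) : ι → ℝ :=
  fun i => α i - ⨅ j, α j

theorem ciInf_add_const_of_finite [Nonempty ι] (f : ι → ℝ) (c : ℝ) :
    ⨅ i, (f i + c) = (⨅ i, f i) + c :=
  ((OrderIso.addRight c).map_ciInf (Set.finite_range f).bddBelow).symm

theorem ciInf_eq_zero_of_mem_coordBoundary [Nonempty ι] {a : ℝ} {α : ι → ℝ}
    (hα : α ∈ coordBoundary a) : ⨅ i, α i = 0 := by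
  obtain ⟨hnonneg, ⟨i, hi⟩, -⟩ := hα
  exact le_antisymm (Finite.ciInf_le_of_le i hi.le) (le_ciInf hnonneg)

theorem sum_liftToSimplex [Nonempty ι] (a : ℝ) (α : ι → ℝ) :
    ∑ i, liftToSimplex a α i = a := by
  have hcard : (Fintype.card ι : ℝ) ≠ 0 := by exact_mod_cast Fintype.card_ne_zero
  simp only [liftToSimplex, Finset.sum_add_distrib, Finset.sum_const, Finset.card_univ,
    nsmul_eq_mul]
  field_simp
  ring

theorem sum_subMin (α : ι → ℝ) :
    ∑ i, subMin α i = ∑ i, α i - Fintype.card ι * ⨅ i, α i := by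
  simp only [subMin, Finset.sum_sub_distrib, Finset.sum_const, Finset.card_univ, nsmul_eq_mul]

theorem liftToSimplex_mapsTo [Nonempty ι] (a : ℝ) :
    MapsTo (liftToSimplex a) (coordBoundary a) (scaledSimplex a : Set (ι → ℝ)) := by
  rintro α ⟨hnonneg, -, hsum⟩
  have hlift : 0 ≤ (a - ∑ j, α j) / Fintype.card ι := div_nonneg (by linarith) (by positivity)
  exact ⟨fun i => add_nonneg (hnonneg i) hlift, sum_liftToSimplex a α⟩

theorem subMin_mapsTo [Nonempty ι] (a : ℝ) :
    MapsTo subMin (scaledSimplex a) (coordBoundary a : Set (ι → ℝ)) := by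
  rintro β ⟨hnonneg, hsum⟩
  have hmin : 0 ≤ ⨅ j, β j := le_ciInf hnonneg
  obtain ⟨i₀, hi₀⟩ := exists_eq_ciInf_of_finite (f := β)
  refine ⟨fun i => sub_nonneg.2 (Finite.ciInf_le_of_le i le_rfl), ⟨i₀, sub_eq_zero.2 hi₀⟩, ?_⟩
  rw [sum_subMin, hsum]
  have : 0 ≤ (Fintype.card ι : ℝ) * ⨅ j, β j := by positivity
  linarith

theorem subMin_liftToSimplex [Nonempty ι] (a : ℝ) {α : ι → ℝ} (hα : ⨅ i, α i = 0) :
    subMin (liftToSimplex a α) = α := by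
  funext i
  simp only [subMin, liftToSimplex, ciInf_add_const_of_finite, hα, zero_add, add_sub_cancel_right]

theorem liftToSimplex_subMin [Nonempty ι] {a : ℝ} {β : ι → ℝ} (hβ : ∑ i, β i = a) :
    liftToSimplex a (subMin β) = β := by
  have hcard : (Fintype.card ι : ℝ) ≠ 0 := by exact_mod_cast Fintype.card_ne_zero
  funext i
  rw [liftToSimplex, sum_subMin, hβ, subMin]
  field_simp
  ring

theorem continuous_liftToSimplex (a : ℝ) : Continuous (liftToSimplex a : (ι → ℝ) → ι → ℝ) := by
  unfold liftToSimplex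
  fun_prop

theorem continuous_subMin [Nonempty ι] : Continuous (subMin : (ι → ℝ) → ι → ℝ) := by
  have hmin : Continuous fun α : ι → ℝ => ⨅ j, α j := by
    simp only [← Finset.inf'_univ_eq_ciInf]
    exact Continuous.finset_inf'_apply _ fun i _ => continuous_apply i
  unfold subMin
  fun_prop

end

theorem phi_homeomorphism_Ba_Aa_general (L : ℕ) (hL : 1 ≤ L) (a : ℝ)
    (A B : Set (Fin L → ℝ))
    (hA : A = {α : Fin L → ℝ | (∀ i, 0 ≤ α i) ∧ ∑ i, α i = a})
    (hB : B = {α : Fin L → ℝ | (∀ i, 0 ≤ α i) ∧ (∃ i, α i = 0) ∧ ∑ i, α i ≤ a})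
    (φ ψ : (Fin L → ℝ) → Fin L → ℝ)
    (hφ : ∀ α i, φ α i = α i + (a - ∑ j, α j) / L)
    (hψ : ∀ α i, ψ α i = α i - ⨅ j, α j) :
    MapsTo φ B A ∧ ContinuousOn φ B ∧ BijOn φ B A ∧
    MapsTo ψ A B ∧ ContinuousOn ψ A ∧
    (∀ α ∈ B, ψ (φ α) = α) ∧ (∀ β ∈ A, φ (ψ β) = β) := by
  have : Nonempty (Fin L) := ⟨⟨0, hL⟩⟩
  obtain rfl : A = scaledSimplex a := hA
  obtain rfl : B = coordBoundary a := hB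
  obtain rfl : φ = liftToSimplex a := by
    funext α i
    rw [hφ, liftToSimplex, Fintype.card_fin]
  obtain rfl : ψ = subMin := funext fun α => funext (hψ α)
  have hleft : ∀ α ∈ (coordBoundary a : Set (Fin L → ℝ)), subMin (liftToSimplex a α) = α := fun α hα =>
    subMin_liftToSimplex a (ciInf_eq_zero_of_mem_coordBoundary hα)
  have hright : ∀ β ∈ (scaledSimplex a : Set (Fin L → ℝ)), liftToSimplex a (subMin β) = β := fun β hβ =>
    liftToSimplex_subMin hβ.2
  exact ⟨liftToSimplex_mapsTo a, (continuous_liftToSimplex a).continuousOn,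
    InvOn.bijOn ⟨hleft, hright⟩ (liftToSimplex_mapsTo a) (subMin_mapsTo a),
    subMin_mapsTo a, continuous_subMin.continuousOn, hleft, hright⟩

theorem phi_homeomorphism_Ba_Aa (L : ℕ) (hL : 1 ≤ L) (a : ℝ) (ha : 0 < a)
    (A B : Set (Fin L → ℝ))
    (hA : A = {α : Fin L → ℝ | (∀ i, 0 ≤ α i) ∧ ∑ i, α i = a})
    (hB : B = {α : Fin L → ℝ | (∀ i, 0 ≤ α i) ∧ (∃ i, α i = 0) ∧ ∑ i, α i ≤ a})
    (φ ψ : (Fin L → ℝ) → Fin L → ℝ)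
    (hφ : ∀ α i, φ α i = α i + (a - ∑ j, α j) / L)
    (hψ : ∀ α i, ψ α i = α i - ⨅ j, α j) :
    MapsTo φ B A ∧ ContinuousOn φ B ∧ BijOn φ B A ∧
    MapsTo ψ A B ∧ ContinuousOn ψ A ∧
    (∀ α ∈ B, ψ (φ α) = α) ∧ (∀ β ∈ A, φ (ψ β) = β) :=
  phi_homeomorphism_Ba_Aa_general L hL a A B hA hB φ ψ hφ hψ
end
end

section
/- Let n ≥ 2, L ≥ 1, and let F = (f_1,…,f_L) : ℝ₊^L → ℝ₊^L be continuous with f_i ≥ 0. Let ᾱ ∈ ℝ^L have all components positive, and suppose the solution u(r) of u_i''(r) + ((n−1)/r) u_i'(r) = −f_i(u(r)), u_i(0) = ᾱ_i, u_i'(0) = 0 (i = 1,…,L) has all components positive for all r ∈ [0,∞). Then the limit β = lim_{r→∞} u(r) exists in ℝ₊^L and F(β) = 0. -/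
open Set Metric Filter Topology

noncomputable section

/-- `F = (f_1, …, f_L)` is non-degenerate: whenever `u ∈ ℝ₊^L` has at least one positive
coordinate and at least one vanishing coordinate, the sum of the components of `F u` over the
indices where `u` vanishes is positive.  (This is equivalent to the formulation via
permutations `i_1, …, i_L` and `1 ≤ k < L`.) -/
def NonDeg {L : ℕ} (F : (Fin L → ℝ) → Fin L → ℝ) : Prop :=
  ∀ u : Fin L → ℝ, (∀ i, 0 ≤ u i) → (∃ i, 0 < u i) → (∃ i, u i = 0) →
    0 < ∑ i, if u i = 0 then F u i else 0

/-- `u` (with derivative `u'`) is a `C²` solution on the set `s ⊆ [0, ∞)` of the radial system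
`u_i'' + ((n-1)/r) u_i' = -f_i(u)`, the radial form of `-Δ u_i = f_i(u)` in `ℝⁿ`. -/
def RadialSol (n : ℕ) {L : ℕ} (F : (Fin L → ℝ) → Fin L → ℝ)
    (u u' : ℝ → Fin L → ℝ) (s : Set ℝ) : Prop :=
  (∀ i, ContinuousOn (fun r => u' r i) s) ∧
  (∀ i, ∀ r ∈ s, HasDerivWithinAt (fun t => u t i) (u' r i) s r) ∧
  (∀ i, ∀ r ∈ s, 0 < r →
    HasDerivWithinAt (fun t => u' t i) (- F (u r) i - ((n : ℝ) - 1) / r * u' r i) s r)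

/-!
Write `n = m + 1`. The flux `r^m u_i'` has derivative `-r^m f_i(u) ≤ 0` and vanishes at `0`,
so `u_i' ≤ 0`: every `u_i` decreases and, being positive, converges. If `f_i(β) > 0`, then
`f_i(u) ≥ c > 0` on some `[R, ∞)`, and comparing `u_i` with `-c r² / (2n)` (whose radial
Laplacian is `-c`) gives `u_i'(r) ≤ -c (r - R) / n` there, so `u_i → -∞`, contradicting
positivity.
-/

theorem AntitoneOn.exists_tendsto_atTop_of_le {ι α : Type*} [LinearOrder ι]
    [ConditionallyCompleteLattice α] [TopologicalSpace α] [InfConvergenceClass α]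
    {f : ι → α} {a : ι} {b : α} (hf : AntitoneOn f (Ici a))
    (hb : ∀ x ∈ Ici a, b ≤ f x) :
    ∃ c, b ≤ c ∧ Tendsto f atTop (𝓝 c) := by
  have : Nonempty ι := ⟨a⟩
  have hg : Antitone fun x => f (max x a) := fun x y hxy =>
    hf (le_max_right x a) (le_max_right y a) (max_le_max_right a hxy)
  refine ⟨⨅ x, f (max x a), le_ciInf fun x => hb _ (le_max_right x a), ?_⟩
  refine (tendsto_atTop_ciInf hg ⟨b, ?_⟩).congr' ?_
  · rintro _ ⟨x, rfl⟩
    exact hb _ (le_max_right x a)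
  · filter_upwards [eventually_ge_atTop a] with x hx
    rw [max_eq_left hx]

theorem antitoneOn_Ici_of_hasDerivAt_nonpos {f f' : ℝ → ℝ} {a : ℝ}
    (hf : ContinuousOn f (Ici a))
    (hf' : ∀ x ∈ Ioi a, HasDerivAt f (f' x) x) (hf'₀ : ∀ x ∈ Ioi a, f' x ≤ 0) :
    AntitoneOn f (Ici a) :=
  antitoneOn_of_hasDerivWithinAt_nonpos (convex_Ici a) hf
    (by simpa only [interior_Ici] using fun x hx => (hf' x hx).hasDerivWithinAt)
    (by simpa only [interior_Ici] using hf'₀)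

theorem tendsto_atBot_of_hasDerivAt_le_neg {f f' : ℝ → ℝ} {a ε : ℝ} (hε : 0 < ε)
    (hf : ContinuousOn f (Ici a)) (hf' : ∀ x ∈ Ioi a, HasDerivAt f (f' x) x)
    (hle : ∀ x ∈ Ioi a, f' x ≤ -ε) : Tendsto f atTop atBot := by
  have hanti : AntitoneOn (fun x => f x + ε * x) (Ici a) :=
    antitoneOn_Ici_of_hasDerivAt_nonpos (hf.add (continuousOn_const.mul continuousOn_id))
      (fun x hx => (hf' x hx).add ((hasDerivAt_id x).const_mul ε))
      (fun x hx => by linarith [hle x hx])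
  have hlin : Tendsto (fun x => f a + ε * a - ε * x) atTop atBot :=
    tendsto_atBot_add_const_left _ _
      (tendsto_neg_atTop_atBot.comp (tendsto_id.const_mul_atTop hε))
  refine tendsto_atBot_mono' _ ?_ hlin
  filter_upwards [eventually_ge_atTop a] with x hx
  linarith [hanti self_mem_Ici hx hx]

namespace RadialSol

variable {n m L : ℕ} {F : (Fin L → ℝ) → Fin L → ℝ} {u u' : ℝ → Fin L → ℝ}

theorem continuousOn (hsol : RadialSol n F u u' (Ici 0)) (i : Fin L) :
    ContinuousOn (fun t => u t i) (Ici 0) :=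
  fun r hr => (hsol.2.1 i r hr).continuousWithinAt

theorem hasDerivAt (hsol : RadialSol n F u u' (Ici 0)) (i : Fin L) {r : ℝ} (hr : 0 < r) :
    HasDerivAt (fun t => u t i) (u' r i) r :=
  (hsol.2.1 i r hr.le).hasDerivAt (Ici_mem_nhds hr)

theorem hasDerivAt_flux (hsol : RadialSol (m + 1) F u u' (Ici 0)) (i : Fin L) {r : ℝ}
    (hr : 0 < r) : HasDerivAt (fun t => t ^ m * u' t i) (-(r ^ m * F (u r) i)) r := by
  have hu'' := (hsol.2.2 i r hr.le hr).hasDerivAt (Ici_mem_nhds hr)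
  refine ((hasDerivAt_pow m r).mul hu'').congr_deriv ?_
  rcases m with _ | m
  · simp
  · push_cast
    field_simp
    ring

theorem antitoneOn_flux_add_pow (hsol : RadialSol (m + 1) F u u' (Ici 0)) (i : Fin L) {R c : ℝ}
    (hR : 0 ≤ R) (hc : ∀ r ∈ Ioi R, c ≤ F (u r) i) :
    AntitoneOn (fun t => t ^ m * u' t i + c / (m + 1) * t ^ (m + 1)) (Ici R) := by
  refine antitoneOn_Ici_of_hasDerivAt_nonpos (f' := fun r => r ^ m * (c - F (u r) i)) ?_
    (fun r hr => ?_) (fun r hr => ?_)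
  · exact (((continuous_pow m).continuousOn.mul (hsol.1 i)).add
      (continuous_const.mul (continuous_pow (m + 1))).continuousOn).mono (Ici_subset_Ici.2 hR)
  · refine ((hsol.hasDerivAt_flux i (hR.trans_lt hr)).add
      ((hasDerivAt_pow (m + 1) r).const_mul _)).congr_deriv ?_
    push_cast
    field_simp
    ring
  · exact mul_nonpos_of_nonneg_of_nonpos (pow_nonneg (hR.trans hr.le) m)
      (sub_nonpos.2 (hc r hr))

theorem flux_nonpos (hsol : RadialSol (m + 1) F u u' (Ici 0)) (hm : m ≠ 0) (i : Fin L)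
    (hF : ∀ r ∈ Ioi 0, 0 ≤ F (u r) i) {r : ℝ} (hr : 0 ≤ r) : r ^ m * u' r i ≤ 0 := by
  have := hsol.antitoneOn_flux_add_pow i le_rfl hF self_mem_Ici hr hr
  simpa [zero_pow hm] using this

theorem deriv_nonpos (hsol : RadialSol (m + 1) F u u' (Ici 0)) (hm : m ≠ 0) (i : Fin L)
    (hF : ∀ r ∈ Ioi 0, 0 ≤ F (u r) i) {r : ℝ} (hr : 0 < r) : u' r i ≤ 0 :=
  nonpos_of_mul_nonpos_right (hsol.flux_nonpos hm i hF hr.le) (pow_pos hr m)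

theorem antitoneOn (hsol : RadialSol (m + 1) F u u' (Ici 0)) (hm : m ≠ 0)
    (hF : ∀ r ∈ Ioi 0, 0 ≤ F (u r)) : AntitoneOn u (Ici 0) := fun _ hr _ hs hrs i =>
  antitoneOn_Ici_of_hasDerivAt_nonpos (hsol.continuousOn i) (fun _ ht => hsol.hasDerivAt i ht)
    (fun _ ht => hsol.deriv_nonpos hm i (fun t ht => hF t ht i) ht) hr hs hrs

theorem deriv_le (hsol : RadialSol (m + 1) F u u' (Ici 0)) (hm : m ≠ 0) (i : Fin L)
    (hF : ∀ r ∈ Ioi 0, 0 ≤ F (u r) i) {R c : ℝ} (hR : 0 < R) (hc₀ : 0 ≤ c)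
    (hc : ∀ r ∈ Ioi R, c ≤ F (u r) i) {r : ℝ} (hr : R ≤ r) :
    u' r i ≤ -(c / (m + 1)) * (r - R) := by
  have hflux := hsol.antitoneOn_flux_add_pow i hR.le hc self_mem_Ici hr hr
  have hfluxR := hsol.flux_nonpos hm i hF hR.le
  have hpow : r ^ m * (r - R) ≤ r ^ (m + 1) - R ^ (m + 1) := by
    have : R * R ^ m ≤ R * r ^ m := by gcongr
    rw [pow_succ, pow_succ']
    nlinarith
  have hk : 0 ≤ c / (m + 1) := by positivity
  refine le_of_mul_le_mul_left ?_ (pow_pos (hR.trans_le hr) m)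
  calc r ^ m * u' r i ≤ -(c / (m + 1)) * (r ^ (m + 1) - R ^ (m + 1)) := by
        simp only at hflux
        linarith
    _ ≤ r ^ m * (-(c / (m + 1)) * (r - R)) := by
        linarith [mul_le_mul_of_nonneg_left hpow hk]

theorem tendsto_atBot (hsol : RadialSol (m + 1) F u u' (Ici 0)) (hm : m ≠ 0) (i : Fin L)
    (hF : ∀ r ∈ Ioi 0, 0 ≤ F (u r) i) {R c : ℝ} (hR : 0 < R) (hc₀ : 0 < c)
    (hc : ∀ r ∈ Ioi R, c ≤ F (u r) i) : Tendsto (fun r => u r i) atTop atBot := by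
  have hk : 0 < c / (m + 1) := by positivity
  refine tendsto_atBot_of_hasDerivAt_le_neg (a := R + 1) hk
    ((hsol.continuousOn i).mono (Ici_subset_Ici.2 (by linarith)))
    (fun r hr => hsol.hasDerivAt i (by linarith [mem_Ioi.1 hr])) (fun r hr => ?_)
  have := hsol.deriv_le hm i hF hR hc₀.le hc (by linarith [mem_Ioi.1 hr] : R ≤ r)
  nlinarith [mem_Ioi.1 hr]

end RadialSol

theorem limit_exists_and_F_vanishes_general (n L : ℕ) (hn : 2 ≤ n)
    (F : (Fin L → ℝ) → Fin L → ℝ)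
    (hFcont : ContinuousOn F {u : Fin L → ℝ | ∀ i, 0 ≤ u i})
    (hFnonneg : ∀ u : Fin L → ℝ, (∀ i, 0 ≤ u i) → ∀ i, 0 ≤ F u i)
    (u u' : ℝ → Fin L → ℝ)
    (hsol : RadialSol n F u u' (Ici 0))
    (hpos : ∀ r ∈ Ici (0 : ℝ), ∀ i, 0 < u r i) :
    ∃ β : Fin L → ℝ, (∀ i, 0 ≤ β i) ∧ Tendsto u atTop (𝓝 β) ∧ F β = 0 := by
  obtain ⟨m, rfl⟩ : ∃ m, n = m + 1 := ⟨n - 1, by omega⟩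
  have hm : m ≠ 0 := by omega
  have hu : ∀ r ∈ Ici (0 : ℝ), 0 ≤ u r := fun r hr i => (hpos r hr i).le
  have hF : ∀ r ∈ Ioi (0 : ℝ), 0 ≤ F (u r) := fun r hr =>
    hFnonneg _ (hu r (Ioi_subset_Ici_self hr))
  obtain ⟨β, hβ, hlim⟩ := (hsol.antitoneOn hm hF).exists_tendsto_atTop_of_le hu
  have hFlim : Tendsto (fun r => F (u r)) atTop (𝓝 (F β)) :=
    (hFcont β hβ).tendsto.comp
      (tendsto_nhdsWithin_iff.2 ⟨hlim, (eventually_ge_atTop 0).mono hu⟩)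
  refine ⟨β, hβ, hlim, funext fun i => ?_⟩
  by_contra hne
  have hc : 0 < F β i := (hFnonneg β hβ i).lt_of_ne' hne
  obtain ⟨R, hR⟩ := eventually_atTop.1
    ((tendsto_pi_nhds.1 hFlim i).eventually (eventually_ge_nhds (half_lt_self hc)))
  have hdiv := hsol.tendsto_atBot hm i (fun r hr => hF r hr i) (R := max R 1) (by positivity)
    (half_pos hc) (fun r hr => hR r ((le_max_left R 1).trans (le_of_lt hr)))
  exact not_tendsto_atBot_of_tendsto_nhds (tendsto_pi_nhds.1 hlim i) hdiv

theorem limit_exists_and_F_vanishes (n L : ℕ) (hn : 2 ≤ n) (hL : 1 ≤ L)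
    (F : (Fin L → ℝ) → Fin L → ℝ)
    (hFcont : ContinuousOn F {u : Fin L → ℝ | ∀ i, 0 ≤ u i})
    (hFnonneg : ∀ u : Fin L → ℝ, (∀ i, 0 ≤ u i) → ∀ i, 0 ≤ F u i)
    (α : Fin L → ℝ) (hα : ∀ i, 0 < α i)
    (u u' : ℝ → Fin L → ℝ)
    (hsol : RadialSol n F u u' (Ici 0))
    (h0 : u 0 = α) (h'0 : ∀ i, u' 0 i = 0)
    (hpos : ∀ r ∈ Ici (0 : ℝ), ∀ i, 0 < u r i) :
    ∃ β : Fin L → ℝ, (∀ i, 0 ≤ β i) ∧ Tendsto u atTop (𝓝 β) ∧ F β = 0 :=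
  limit_exists_and_F_vanishes_general n L hn F hFcont hFnonneg u u' hsol hpos
end
end

section
/- Let n ≥ 2, L ≥ 2, and let F = (f_1,…,f_L) : ℝ₊^L → ℝ₊^L be continuous, Lipschitz on the interior of ℝ₊^L, non-degenerate, with f_i ≥ 0. Let ᾱ ∈ ∂ℝ₊^L with ᾱ ≠ 0 (so ᾱ has at least one zero coordinate and at least one positive coordinate). Then for every ε > 0 there exists δ > 0 such that for every initial value α with all components positive and |α − ᾱ| < δ, the solution u(r,α) of u_i'' + ((n−1)/r) u_i' = −f_i(u), u(0) = α, u'(0) = 0 reaches ∂ℝ₊^L at some first time r_α < ε (some component of u(r_α,α) vanishes), and |u(r_α,α) − ᾱ| < ε. -/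
/-!
Let `Z` be the set of coordinates where `ᾱ` vanishes. By continuity and non-degeneracy, near `ᾱ`
in the closed positive cone `0 ≤ f_i ≤ M` and `∑_{i ∈ Z} f_i ≥ c > 0`. In divergence form the
equation reads `(r^{n-1} u_i')' = -r^{n-1} f_i(u)`, so while the solution stays positive and near
`ᾱ` we get `-M r / n ≤ u_i' ≤ 0` and `∑_{i ∈ Z} u_i' ≤ -c r / n`; integrating,
`‖u(r) - α‖ ≤ M r² / 2n` and `∑_{i ∈ Z} u_i(r) ≤ ∑_{i ∈ Z} α_i - c r² / 2n`.
Fix a small time `R`. For `α` close to `ᾱ` the sum over `Z` starts below `c R² / 2n`, so the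
solution leaves the positive cone before time `R`, while the first bound keeps it near `ᾱ` until
then.
-/

open Set Metric Filter Topology

noncomputable section

section RadialComparison

variable {n : ℕ} {v g : ℝ → ℝ} {R : ℝ}

theorem hasDerivAt_radial_divergence_form (hn : 1 ≤ n) {r g₀ a : ℝ} (hr : r ≠ 0)
    (hv : HasDerivAt v (-g₀ - ((n : ℝ) - 1) / r * v r) r) :
    HasDerivAt (fun t => t ^ (n - 1) * v t + a / n * t ^ n) (r ^ (n - 1) * (a - g₀)) r := by
  obtain ⟨k, rfl⟩ := Nat.exists_eq_add_of_le' hn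
  refine (((hasDerivAt_pow k r).fun_mul hv).fun_add
    ((hasDerivAt_pow (k + 1) r).const_mul (a / (k + 1 : ℕ)))).congr_deriv ?_
  rcases k with _ | k
  · simp [add_comm, sub_eq_add_neg]
  · simp only [Nat.add_sub_cancel]
    push_cast
    field_simp
    ring

theorem radial_deriv_le (hn : 1 ≤ n) (hv : ContinuousOn v (Icc 0 R)) (hv0 : v 0 = 0)
    (hderiv : ∀ r ∈ Ioo 0 R, HasDerivAt v (-g r - ((n : ℝ) - 1) / r * v r) r) {m : ℝ}
    (hm : ∀ r ∈ Ioo 0 R, m ≤ g r) : ∀ r ∈ Icc 0 R, v r ≤ -(m / n) * r := by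
  have hanti : AntitoneOn (fun t => t ^ (n - 1) * v t + m / n * t ^ n) (Icc 0 R) := by
    refine antitoneOn_of_hasDerivWithinAt_nonpos (f' := fun r => r ^ (n - 1) * (m - g r))
      (convex_Icc 0 R) (by fun_prop) (fun r hr => ?_) (fun r hr => ?_) <;> rw [interior_Icc] at hr
    · exact (hasDerivAt_radial_divergence_form hn hr.1.ne' (hderiv r hr)).hasDerivWithinAt
    · exact mul_nonpos_of_nonneg_of_nonpos (pow_nonneg hr.1.le _) (sub_nonpos.2 (hm r hr))
  intro r hr
  rcases hr.1.eq_or_lt with rfl | hr0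
  · simp [hv0]
  have h := hanti ⟨le_rfl, hr.1.trans hr.2⟩ hr hr.1
  simp only [hv0, mul_zero, zero_pow (by omega : n ≠ 0), add_zero] at h
  rw [← pow_sub_one_mul (by omega : n ≠ 0)] at h
  have hpos : 0 < r ^ (n - 1) := pow_pos hr0 _
  nlinarith

theorem le_radial_deriv (hn : 1 ≤ n) (hv : ContinuousOn v (Icc 0 R)) (hv0 : v 0 = 0)
    (hderiv : ∀ r ∈ Ioo 0 R, HasDerivAt v (-g r - ((n : ℝ) - 1) / r * v r) r) {M : ℝ}
    (hM : ∀ r ∈ Ioo 0 R, g r ≤ M) : ∀ r ∈ Icc 0 R, -(M / n) * r ≤ v r := by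
  have h := radial_deriv_le (v := -v) (g := -g) hn hv.neg (by simp [hv0])
    (fun r hr => by simpa [add_comm] using (hderiv r hr).neg)
    (m := -M) (fun r hr => neg_le_neg (hM r hr))
  intro r hr
  have := h r hr
  simp only [Pi.neg_apply, neg_div] at this
  linarith

theorem sub_le_of_deriv_le_mul {w w' : ℝ → ℝ} {b : ℝ} (hw : ContinuousOn w (Icc 0 R))
    (hderiv : ∀ r ∈ Ioo 0 R, HasDerivAt w (w' r) r) (hle : ∀ r ∈ Ioo 0 R, w' r ≤ b * r) :
    ∀ r ∈ Icc 0 R, w r - w 0 ≤ b / 2 * r ^ 2 := by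
  have hanti : AntitoneOn (fun t => w t - b / 2 * t ^ 2) (Icc 0 R) := by
    refine antitoneOn_of_hasDerivWithinAt_nonpos (f' := fun r => w' r - b * r)
      (convex_Icc 0 R) (by fun_prop) (fun r hr => ?_) (fun r hr => ?_) <;> rw [interior_Icc] at hr
    · exact ((hderiv r hr).sub ((hasDerivAt_pow 2 r).const_mul (b / 2))).hasDerivWithinAt
        |>.congr_deriv (by ring)
    · exact sub_nonpos.2 (hle r hr)
  intro r hr
  have := hanti ⟨le_rfl, hr.1.trans hr.2⟩ hr hr.1
  simp only [ne_eq, OfNat.ofNat_ne_zero, not_false_eq_true, zero_pow, mul_zero, sub_zero] at this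
  linarith

theorem le_sub_of_mul_le_deriv {w w' : ℝ → ℝ} {b : ℝ} (hw : ContinuousOn w (Icc 0 R))
    (hderiv : ∀ r ∈ Ioo 0 R, HasDerivAt w (w' r) r) (hle : ∀ r ∈ Ioo 0 R, b * r ≤ w' r) :
    ∀ r ∈ Icc 0 R, b / 2 * r ^ 2 ≤ w r - w 0 := by
  intro r hr
  have := sub_le_of_deriv_le_mul (w := -w) (b := -b) hw.neg (fun r hr => (hderiv r hr).neg)
    (fun r hr => by simpa using hle r hr) r hr
  simp only [Pi.neg_apply] at this
  linarith

end RadialComparison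

theorem ContinuousOn.exists_first_exit {X : Type*} [TopologicalSpace X] {f : ℝ → X} {R : ℝ}
    {G : Set X} (hf : ContinuousOn f (Icc 0 R)) (hG : IsOpen G) (h0 : f 0 ∈ G)
    (hexit : ∃ r ∈ Icc 0 R, f r ∉ G) :
    ∃ T ∈ Ioc 0 R, f T ∈ closure G \ G ∧ ∀ r ∈ Ico 0 T, f r ∈ G := by
  have hA : IsCompact (Icc 0 R ∩ f ⁻¹' Gᶜ) := isCompact_Icc.of_isClosed_subset
    (hf.preimage_isClosed_of_isClosed isClosed_Icc hG.isClosed_compl) inter_subset_left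
  obtain ⟨T, ⟨hTR, hTG⟩, hTleast⟩ := hA.exists_isLeast hexit
  have hfree : ∀ r ∈ Ico 0 T, f r ∈ G := fun r hr => by
    by_contra hr'
    exact hr.2.not_ge (hTleast ⟨⟨hr.1, hr.2.le.trans hTR.2⟩, hr'⟩)
  have hT0 : 0 < T := hTR.1.lt_of_ne (by rintro rfl; exact hTG h0)
  have hclosure : f T ∈ closure G :=
    (hf T hTR |>.mono (Ico_subset_Icc_self.trans (Icc_subset_Icc_right hTR.2))).mem_closure
      (by rw [closure_Ico hT0.ne]; exact ⟨hT0.le, le_rfl⟩) hfree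
  exact ⟨T, ⟨hT0, hTR.2⟩, ⟨hclosure, hTG⟩, hfree⟩

namespace RadialSol

variable {n L : ℕ} {F : (Fin L → ℝ) → Fin L → ℝ} {u u' : ℝ → Fin L → ℝ} {R : ℝ}

theorem mono {s t : Set ℝ} (h : RadialSol n F u u' s) (hts : t ⊆ s) : RadialSol n F u u' t :=
  ⟨fun i => (h.1 i).mono hts, fun i r hr => (h.2.1 i r (hts hr)).mono hts,
    fun i r hr hr0 => (h.2.2 i r (hts hr) hr0).mono hts⟩

theorem continuousOn_s14 {s : Set ℝ} (h : RadialSol n F u u' s) : ContinuousOn u s :=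
  continuousOn_pi.2 fun i r hr => (h.2.1 i r hr).continuousWithinAt

theorem hasDerivAt_sum (h : RadialSol n F u u' (Icc 0 R)) (S : Finset (Fin L)) {r : ℝ}
    (hr : r ∈ Ioo 0 R) : HasDerivAt (fun t => ∑ i ∈ S, u t i) (∑ i ∈ S, u' r i) r :=
  .fun_sum fun i _ => (h.2.1 i r (Ioo_subset_Icc_self hr)).hasDerivAt (Icc_mem_nhds hr.1 hr.2)

theorem hasDerivAt_sum_deriv (h : RadialSol n F u u' (Icc 0 R)) (S : Finset (Fin L)) {r : ℝ}
    (hr : r ∈ Ioo 0 R) :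
    HasDerivAt (fun t => ∑ i ∈ S, u' t i)
      (-∑ i ∈ S, F (u r) i - ((n : ℝ) - 1) / r * ∑ i ∈ S, u' r i) r := by
  have := HasDerivAt.fun_sum (u := S) fun i _ =>
    (h.2.2 i r (Ioo_subset_Icc_self hr) hr.1).hasDerivAt (Icc_mem_nhds hr.1 hr.2)
  simpa [Finset.sum_sub_distrib, Finset.mul_sum] using this

theorem sum_sub_sum_le (h : RadialSol n F u u' (Icc 0 R)) (hn : 1 ≤ n)
    (hu'0 : ∀ i, u' 0 i = 0) (S : Finset (Fin L)) {m : ℝ}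
    (hm : ∀ r ∈ Ioo 0 R, m ≤ ∑ i ∈ S, F (u r) i) :
    ∀ r ∈ Icc 0 R, ∑ i ∈ S, u r i - ∑ i ∈ S, u 0 i ≤ -(m / n) / 2 * r ^ 2 := by
  have hv := radial_deriv_le hn (continuousOn_finsetSum S fun i _ => h.1 i) (by simp [hu'0])
    (fun r hr => h.hasDerivAt_sum_deriv S hr) hm
  exact sub_le_of_deriv_le_mul
    (continuousOn_finsetSum S fun i _ => (continuous_apply i).comp_continuousOn h.continuousOn_s14)
    (fun r hr => h.hasDerivAt_sum S hr) fun r hr => hv r (Ioo_subset_Icc_self hr)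

theorem le_sum_sub_sum (h : RadialSol n F u u' (Icc 0 R)) (hn : 1 ≤ n)
    (hu'0 : ∀ i, u' 0 i = 0) (S : Finset (Fin L)) {M : ℝ}
    (hM : ∀ r ∈ Ioo 0 R, ∑ i ∈ S, F (u r) i ≤ M) :
    ∀ r ∈ Icc 0 R, -(M / n) / 2 * r ^ 2 ≤ ∑ i ∈ S, u r i - ∑ i ∈ S, u 0 i := by
  have hv := le_radial_deriv hn (continuousOn_finsetSum S fun i _ => h.1 i) (by simp [hu'0])
    (fun r hr => h.hasDerivAt_sum_deriv S hr) hM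
  exact le_sub_of_mul_le_deriv
    (continuousOn_finsetSum S fun i _ => (continuous_apply i).comp_continuousOn h.continuousOn_s14)
    (fun r hr => h.hasDerivAt_sum S hr) fun r hr => hv r (Ioo_subset_Icc_self hr)

theorem norm_sub_le (h : RadialSol n F u u' (Icc 0 R)) (hn : 1 ≤ n) (hu'0 : ∀ i, u' 0 i = 0)
    {M : ℝ} (hM : 0 ≤ M) (hF : ∀ r ∈ Ioo 0 R, ∀ i, 0 ≤ F (u r) i ∧ F (u r) i ≤ M) :
    ∀ r ∈ Icc 0 R, ‖u r - u 0‖ ≤ M / n / 2 * r ^ 2 := by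
  intro r hr
  refine (pi_norm_le_iff_of_nonneg (by positivity)).2 fun i => ?_
  have hup := h.sum_sub_sum_le hn hu'0 {i} (m := 0) (by simpa using fun r hr => (hF r hr i).1) r hr
  have hlow := h.le_sum_sub_sum hn hu'0 {i} (by simpa using fun r hr => (hF r hr i).2) r hr
  simp only [Finset.sum_singleton, zero_div, neg_zero, zero_mul] at hup hlow
  rw [Pi.sub_apply, Real.norm_eq_abs, abs_le]
  constructor <;> linarith

variable {ᾱ : Fin L → ℝ} {ρ M c : ℝ} {Z : Finset (Fin L)}

theorem norm_sub_le_and_sum_le_of_trapped (h : RadialSol n F u u' (Icc 0 R)) (hn : 1 ≤ n)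
    (hu'0 : ∀ i, u' 0 i = 0) (hM : 0 ≤ M)
    (hF : ∀ v, (∀ i, 0 < v i) → ‖v - ᾱ‖ < ρ → (∀ i, 0 ≤ F v i ∧ F v i ≤ M) ∧ c ≤ ∑ i ∈ Z, F v i)
    (htrap : ∀ r ∈ Ioo 0 R, (∀ i, 0 < u r i) ∧ ‖u r - ᾱ‖ < ρ) (hR : 0 ≤ R) :
    ‖u R - ᾱ‖ ≤ ‖u 0 - ᾱ‖ + M / n / 2 * R ^ 2 ∧
      ∑ i ∈ Z, u R i ≤ ∑ i ∈ Z, u 0 i - c / n / 2 * R ^ 2 := by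
  have hFu : ∀ r ∈ Ioo 0 R, (∀ i, 0 ≤ F (u r) i ∧ F (u r) i ≤ M) ∧ c ≤ ∑ i ∈ Z, F (u r) i :=
    fun r hr => hF (u r) (htrap r hr).1 (htrap r hr).2
  have hR' : R ∈ Icc 0 R := ⟨hR, le_rfl⟩
  have hdist := h.norm_sub_le hn hu'0 hM (fun r hr => (hFu r hr).1) R hR'
  have hsum := h.sum_sub_sum_le hn hu'0 Z (fun r hr => (hFu r hr).2) R hR'
  constructor
  · linarith [norm_sub_le_norm_sub_add_norm_sub (u R) (u 0) ᾱ]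
  · linarith [neg_div (n : ℝ) c]

theorem exists_first_boundary_hit (h : RadialSol n F u u' (Icc 0 R)) (hn : 1 ≤ n)
    (hu'0 : ∀ i, u' 0 i = 0) (hM : 0 ≤ M)
    (hF : ∀ v, (∀ i, 0 < v i) → ‖v - ᾱ‖ < ρ → (∀ i, 0 ≤ F v i ∧ F v i ≤ M) ∧ c ≤ ∑ i ∈ Z, F v i)
    (hR : 0 ≤ R) (hpos : ∀ i, 0 < u 0 i) (hnear : ‖u 0 - ᾱ‖ + M / n / 2 * R ^ 2 < ρ)
    (hZ : ∑ i ∈ Z, u 0 i < c / n / 2 * R ^ 2) :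
    ∃ T ∈ Ioc 0 R, (∀ r ∈ Ico 0 T, ∀ i, 0 < u r i) ∧ (∃ i, u T i = 0) ∧ ‖u T - ᾱ‖ < ρ := by
  set G : Set (Fin L → ℝ) := univ.pi (fun _ => Ioi 0) ∩ ball ᾱ ρ with hG
  have hmemG : ∀ v, v ∈ G ↔ (∀ i, 0 < v i) ∧ ‖v - ᾱ‖ < ρ := by simp [hG, dist_eq_norm]
  have hest : ∀ t ∈ Icc 0 R, (∀ r ∈ Ico 0 t, u r ∈ G) →
      ‖u t - ᾱ‖ < ρ ∧ ∑ i ∈ Z, u t i ≤ ∑ i ∈ Z, u 0 i - c / n / 2 * t ^ 2 := by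
    intro t ht hin
    obtain ⟨hdist, hsum⟩ := (h.mono (Icc_subset_Icc_right ht.2)).norm_sub_le_and_sum_le_of_trapped
      hn hu'0 hM hF (fun r hr => (hmemG _).1 (hin r (Ioo_subset_Ico_self hr))) ht.1
    have hKR : M / n / 2 * t ^ 2 ≤ M / n / 2 * R ^ 2 :=
      mul_le_mul_of_nonneg_left (pow_le_pow_left₀ ht.1 ht.2 2) (by positivity)
    exact ⟨by linarith, hsum⟩
  have hexit : ∃ r ∈ Icc 0 R, u r ∉ G := by
    by_contra! hin
    have hsum := (hest R ⟨hR, le_rfl⟩ fun r hr => hin r ⟨hr.1, hr.2.le⟩).2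
    have hposR := ((hmemG _).1 (hin R ⟨hR, le_rfl⟩)).1
    linarith [Finset.sum_nonneg fun i (_ : i ∈ Z) => (hposR i).le]
  have hG0 : u 0 ∈ G := (hmemG _).2 ⟨hpos, by linarith [(by positivity : 0 ≤ M / n / 2 * R ^ 2)]⟩
  obtain ⟨T, hT, hTG, hfree⟩ := h.continuousOn_s14.exists_first_exit
    ((isOpen_set_pi finite_univ fun _ _ => isOpen_Ioi).inter isOpen_ball) hG0 hexit
  have hnearT := (hest T (Ioc_subset_Icc_self hT) hfree).1
  have hnonneg : u T ∈ univ.pi fun _ => Ici (0 : ℝ) :=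
    closure_minimal (inter_subset_left.trans (pi_mono fun _ _ => Ioi_subset_Ici_self))
      (isClosed_set_pi fun _ _ => isClosed_Ici) hTG.1
  obtain ⟨i, hi⟩ : ∃ i, u T i ≤ 0 := by
    by_contra! hcon
    exact hTG.2 ((hmemG _).2 ⟨hcon, hnearT⟩)
  exact ⟨T, hT, fun r hr => ((hmemG _).1 (hfree r hr)).1,
    ⟨i, le_antisymm hi (hnonneg i (mem_univ i))⟩, hnearT⟩

theorem exists_nhds_first_boundary_hit (hn : 1 ≤ n) (hM : 0 ≤ M) (hc : 0 < c)
    (hZ : ∀ i ∈ Z, ᾱ i = 0)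
    (hF : ∀ v, (∀ i, 0 < v i) → ‖v - ᾱ‖ < ρ → (∀ i, 0 ≤ F v i ∧ F v i ≤ M) ∧ c ≤ ∑ i ∈ Z, F v i)
    (hρ : 0 < ρ) {ε : ℝ} (hε : 0 < ε) :
    ∃ δ > 0, ∀ u u' : ℝ → Fin L → ℝ, RadialSol n F u u' (Icc 0 ε) → (∀ i, u' 0 i = 0) →
      (∀ i, 0 < u 0 i) → ‖u 0 - ᾱ‖ < δ →
      ∃ T ∈ Ioo 0 ε, (∀ r ∈ Ico 0 T, ∀ i, 0 < u r i) ∧ (∃ i, u T i = 0) ∧ ‖u T - ᾱ‖ < ρ := by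
  have hsq : ∀ᶠ r in 𝓝 (0 : ℝ), M / n / 2 * r ^ 2 < ρ :=
    Filter.Tendsto.eventually_lt_const hρ
      (Continuous.tendsto' (f := fun r : ℝ => M / n / 2 * r ^ 2) (by fun_prop) 0 0 (by simp))
  obtain ⟨R, ⟨hRε, hRρ⟩, hR⟩ :=
    ((((eventually_lt_nhds hε).and hsq).filter_mono nhdsWithin_le_nhds).and
      (self_mem_nhdsWithin (s := Ioi 0))).exists
  have hclose : ∀ᶠ α in 𝓝 ᾱ,
      ‖α - ᾱ‖ + M / n / 2 * R ^ 2 < ρ ∧ ∑ i ∈ Z, α i < c / n / 2 * R ^ 2 :=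
    (Filter.Tendsto.eventually_lt_const hRρ (Continuous.tendsto'
      (f := fun α => ‖α - ᾱ‖ + M / n / 2 * R ^ 2) (by fun_prop) ᾱ _ (by simp))).and
    (Filter.Tendsto.eventually_lt_const (by positivity) (Continuous.tendsto'
      (f := fun α : Fin L → ℝ => ∑ i ∈ Z, α i) (by fun_prop) ᾱ 0 (Finset.sum_eq_zero hZ)))
  obtain ⟨δ, hδ, hδα⟩ := Metric.eventually_nhds_iff.1 hclose
  refine ⟨δ, hδ, fun u u' h hu'0 hpos hu0 => ?_⟩
  obtain ⟨hnear, hsum⟩ := hδα (by rwa [dist_eq_norm])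
  obtain ⟨T, hT, hposT, hzero, hTρ⟩ :=
    (h.mono (Icc_subset_Icc_right hRε.le)).exists_first_boundary_hit hn hu'0 hM hF hR.le hpos
      hnear hsum
  exact ⟨T, ⟨hT.1, hT.2.trans_lt hRε⟩, hposT, hzero, hTρ⟩

end RadialSol

theorem NonDeg.sum_pos {L : ℕ} {F : (Fin L → ℝ) → Fin L → ℝ} (hF : NonDeg F) {x : Fin L → ℝ}
    (hx : ∀ i, 0 ≤ x i) (hbdry : ∃ i, x i = 0) (hne : x ≠ 0) :
    0 < ∑ i ∈ {i | x i = 0}, F x i := by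
  obtain ⟨j, hj⟩ := Function.ne_iff.1 hne
  simpa [Finset.sum_filter] using hF x hx ⟨j, (hx j).lt_of_ne' hj⟩ hbdry

theorem eventually_le_and_lt_sum {ι E : Type*} [Fintype ι] [TopologicalSpace E]
    {F : E → ι → ℝ} {s : Set E} {x : E} (hF : ContinuousWithinAt F s x) (Z : Finset ι) {c : ℝ}
    (hc : c < ∑ i ∈ Z, F x i) :
    ∀ᶠ v in 𝓝[s] x, (∀ i, F v i ≤ ‖F x‖ + 1) ∧ c ≤ ∑ i ∈ Z, F v i := by
  have hnorm := Filter.Tendsto.eventually_lt_const (lt_add_one ‖F x‖) hF.norm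
  have hsum := Filter.Tendsto.eventually_const_lt hc <|
    tendsto_finsetSum Z fun i _ => ((continuous_apply i).tendsto (F x)).comp hF
  filter_upwards [hnorm, hsum] with v hv hv'
  exact ⟨fun i => (le_abs_self _).trans ((norm_le_pi_norm (F v) i).trans hv.le), hv'.le⟩

theorem target_map_continuous_at_boundary_general (n L : ℕ) (hn : 2 ≤ n)
    (F : (Fin L → ℝ) → Fin L → ℝ)
    (hFcont : ContinuousOn F {u : Fin L → ℝ | ∀ i, 0 ≤ u i})
    (hFnonneg : ∀ u : Fin L → ℝ, (∀ i, 0 ≤ u i) → ∀ i, 0 ≤ F u i)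
    (hFnd : NonDeg F)
    (ᾱ : Fin L → ℝ) (hᾱnonneg : ∀ i, 0 ≤ ᾱ i) (hᾱbdry : ∃ i, ᾱ i = 0) (hᾱne : ᾱ ≠ 0) :
    ∀ ε : ℝ, 0 < ε → ∃ δ : ℝ, 0 < δ ∧
      ∀ α : Fin L → ℝ, (∀ i, 0 < α i) → ‖α - ᾱ‖ < δ →
        ∀ u u' : ℝ → Fin L → ℝ,
          RadialSol n F u u' (Icc 0 ε) → u 0 = α → (∀ i, u' 0 i = 0) →
          ∃ rα : ℝ, 0 ≤ rα ∧ rα < ε ∧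
            (∀ r ∈ Ico (0 : ℝ) rα, ∀ i, 0 < u r i) ∧
            (∃ i, u rα i = 0) ∧ ‖u rα - ᾱ‖ < ε := by
  intro ε hε
  have hc := hFnd.sum_pos hᾱnonneg hᾱbdry hᾱne
  obtain ⟨ρ₀, hρ₀, hFρ₀⟩ := Metric.eventually_nhds_iff.1 <| eventually_nhdsWithin_iff.1 <|
    eventually_le_and_lt_sum (hFcont ᾱ hᾱnonneg) _ (half_lt_self hc)
  have hF : ∀ v, (∀ i, 0 < v i) → ‖v - ᾱ‖ < min ρ₀ ε →
      (∀ i, 0 ≤ F v i ∧ F v i ≤ ‖F ᾱ‖ + 1) ∧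
        (∑ i ∈ {i | ᾱ i = 0}, F ᾱ i) / 2 ≤ ∑ i ∈ {i | ᾱ i = 0}, F v i := fun v hv hvρ => by
    have hv' : ∀ i, 0 ≤ v i := fun i => (hv i).le
    obtain ⟨hle, hsum⟩ := hFρ₀ (by rw [dist_eq_norm]; exact hvρ.trans_le (min_le_left _ _)) hv'
    exact ⟨fun i => ⟨hFnonneg v hv' i, hle i⟩, hsum⟩
  obtain ⟨δ, hδ, hδu⟩ := RadialSol.exists_nhds_first_boundary_hit (n := n)
    (by omega) (by positivity) (half_pos hc) (by simp) hF (lt_min hρ₀ hε) hε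
  refine ⟨δ, hδ, fun α hα hαδ u u' hsol hu0 hu'0 => ?_⟩
  subst hu0
  obtain ⟨T, hT, hpos, hzero, hTρ⟩ := hδu u u' hsol hu'0 hα hαδ
  exact ⟨T, hT.1.le, hT.2, hpos, hzero, hTρ.trans_le (min_le_right _ _)⟩

theorem target_map_continuous_at_boundary (n L : ℕ) (hn : 2 ≤ n) (hL : 2 ≤ L)
    (F : (Fin L → ℝ) → Fin L → ℝ)
    (hFcont : ContinuousOn F {u : Fin L → ℝ | ∀ i, 0 ≤ u i})
    (hFnonneg : ∀ u : Fin L → ℝ, (∀ i, 0 ≤ u i) → ∀ i, 0 ≤ F u i)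
    (hFlip : LocallyLipschitzOn {u : Fin L → ℝ | ∀ i, 0 < u i} F)
    (hFnd : NonDeg F)
    (ᾱ : Fin L → ℝ) (hᾱnonneg : ∀ i, 0 ≤ ᾱ i) (hᾱbdry : ∃ i, ᾱ i = 0) (hᾱne : ᾱ ≠ 0) :
    ∀ ε : ℝ, 0 < ε → ∃ δ : ℝ, 0 < δ ∧
      ∀ α : Fin L → ℝ, (∀ i, 0 < α i) → ‖α - ᾱ‖ < δ →
        ∀ u u' : ℝ → Fin L → ℝ,
          RadialSol n F u u' (Icc 0 ε) → u 0 = α → (∀ i, u' 0 i = 0) →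
          ∃ rα : ℝ, 0 ≤ rα ∧ rα < ε ∧
            (∀ r ∈ Ico (0 : ℝ) rα, ∀ i, 0 < u r i) ∧
            (∃ i, u rα i = 0) ∧ ‖u rα - ᾱ‖ < ε :=
  target_map_continuous_at_boundary_general n L hn F hFcont hFnonneg hFnd ᾱ hᾱnonneg hᾱbdry hᾱne
end
end
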